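/- In a unidirectional linear morph (where each point moves at uniform speed along a straight-line trajectory, and all trajectories are parallel to a common direction vector d), consider three points p, q, r moving from positions p₀, q₀, r₀ at time 0 to positions p₁, q₁, r₁ at time 1. If at time 0 and at time 1 the point p lies strictly on the same side of the oriented line through q and r (i.e., the cross product (q₀ - p₀) × (r₀ - p₀) and (q₁ - p₁) × (r₁ - p₁) have the same strict sign), then at every time t ∈ [0,1] the point p(t) = (1-t)p₀ + t·p₁ lies strictly on that same side of the oriented line through q(t) and r(t). -/
import Mathlib


/-- Cross product of two planar vectors. -/
def cross2 (u v : ℝ × ℝ) : ℝ := u.1 * v.2 - u.2 * v.1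

/-- Sidedness of `p` w.r.t. the oriented line through `q` and `r`. -/
def sideSign (p q r : ℝ × ℝ) : ℝ := cross2 (q - p) (r - p)

/-- Lemma 7.2 (Alamdari et al.): during a unidirectional linear morph, if a point `p`
is strictly on one side of the oriented line through `q` and `r` at times 0 and 1,
it is strictly on that side throughout. -/
theorem unidirectional_morph_preserves_side
    (d : ℝ × ℝ) (p₀ p₁ q₀ q₁ r₀ r₁ : ℝ × ℝ)
    (sp sq sr : ℝ)
    (hp : p₁ - p₀ = sp • d) (hq : q₁ - q₀ = sq • d) (hr : r₁ - r₀ = sr • d)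
    (hsame :
      (0 < sideSign p₀ q₀ r₀ ∧ 0 < sideSign p₁ q₁ r₁) ∨
      (sideSign p₀ q₀ r₀ < 0 ∧ sideSign p₁ q₁ r₁ < 0)) :
    ∀ t : ℝ, t ∈ Set.Icc (0:ℝ) 1 →
      ((0 < sideSign p₀ q₀ r₀ →
          0 < sideSign ((1-t) • p₀ + t • p₁) ((1-t) • q₀ + t • q₁) ((1-t) • r₀ + t • r₁)) ∧
       (sideSign p₀ q₀ r₀ < 0 →
          sideSign ((1-t) • p₀ + t • p₁) ((1-t) • q₀ + t • q₁) ((1-t) • r₀ + t • r₁) < 0)) := by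
  intro t ht
  obtain ⟨ht0, ht1⟩ := ht
  have hp1 : p₁.1 = p₀.1 + sp * d.1 := by
    have := congrArg Prod.fst hp; simp at this; linarith
  have hp2 : p₁.2 = p₀.2 + sp * d.2 := by
    have := congrArg Prod.snd hp; simp at this; linarith
  have hq1 : q₁.1 = q₀.1 + sq * d.1 := by
    have := congrArg Prod.fst hq; simp at this; linarith
  have hq2 : q₁.2 = q₀.2 + sq * d.2 := by
    have := congrArg Prod.snd hq; simp at this; linarith
  have hr1 : r₁.1 = r₀.1 + sr * d.1 := by
    have := congrArg Prod.fst hr; simp at this; linarith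
  have hr2 : r₁.2 = r₀.2 + sr * d.2 := by
    have := congrArg Prod.snd hr; simp at this; linarith
  have key : sideSign ((1-t) • p₀ + t • p₁) ((1-t) • q₀ + t • q₁) ((1-t) • r₀ + t • r₁)
      = (1 - t) * sideSign p₀ q₀ r₀ + t * sideSign p₁ q₁ r₁ := by
    simp only [sideSign, cross2, Prod.fst_sub, Prod.snd_sub, Prod.fst_add, Prod.snd_add,
      Prod.smul_fst, Prod.smul_snd, smul_eq_mul]
    rw [hp1, hp2, hq1, hq2, hr1, hr2]; ring
  rcases hsame with ⟨h0, h1⟩ | ⟨h0, h1⟩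
  · constructor
    · intro _
      rw [key]
      rcases eq_or_lt_of_le ht1 with h | h
      · subst h; simpa using h1
      · nlinarith
    · intro h; linarith
  · constructor
    · intro h; linarith
    · intro _
      rw [key]
      rcases eq_or_lt_of_le ht1 with h | h
      · subst h; simpa using h1
      · nlinarith
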